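/- Let S = {v ∈ EuclideanSpace ℂ (Fin 2) : ‖v 0‖ = ‖v 1‖} (this is the description, in the standard affine coordinate chart of ℂP² centered at the point [0,0,1], of the set M = {[z₀,z₁,z₂] ∈ ℂP² : |z₀| = |z₁|}). Then S is not the graph of a Lipschitz function in any neighborhood of the origin; precisely: there do not exist a neighborhood U of 0 in EuclideanSpace ℂ (Fin 2), a real-linear isometric equivalence L : EuclideanSpace ℂ (Fin 2) ≃ EuclideanSpace ℝ (Fin 4) (an orthogonal change of real coordinates identifying ℂ² with ℝ⁴ = ℝ³ × ℝ), and a Lipschitz function ψ : EuclideanSpace ℝ (Fin 3) → ℝ such that S ∩ U = {p ∈ U : (L p) 3 = ψ (x(p))}, where x(p) ∈ EuclideanSpace ℝ (Fin 3) denotes the first three coordinates (L p) 0, (L p) 1, (L p) 2 of L p. -/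

import Mathlib

/-!
The set `S` is a complex cone: `c • v ∈ S` whenever `v ∈ S` and `c ≠ 0`. If near `0` it were the
zero set of the continuous function `g p = (L p) 3 - ψ (x p)`, take `e = L⁻¹ e₃`, along whose real
line `g (s • e) = s`. The circle `z ↦ z • (t • e)` joins `t • e` to `-t • e`, so `g` vanishes at
some `z • (t • e)`, which then lies in `S`; by the cone property so does `t • e`, i.e. `t = 0`.
-/

open Metric

theorem exists_circle_smul_eq_zero {E : Type*} [AddCommGroup E] [Module ℂ E] [TopologicalSpace E]
    [ContinuousSMul ℂ E] {g : E → ℝ} (hg : Continuous g) {v : E} (hneg : g (-v) ≤ 0)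
    (hpos : 0 ≤ g v) : ∃ z : Circle, g ((z : ℂ) • v) = 0 := by
  have hcont : Continuous fun z : Circle => g ((z : ℂ) • v) :=
    hg.comp (continuous_subtype_val.smul continuous_const)
  exact intermediate_value_univ (-1) 1 hcont ⟨by simpa using hneg, by simpa using hpos⟩

theorem eq_zero_of_sign_change_of_complex_cone {E : Type*} [SeminormedAddCommGroup E]
    [NormedSpace ℂ E] {S : Set E} (hS : ∀ c : ℂ, c ≠ 0 → ∀ v ∈ S, c • v ∈ S) {g : E → ℝ}
    (hg : Continuous g) {r : ℝ} (hSg : ∀ p ∈ ball 0 r, p ∈ S ↔ g p = 0) {v : E}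
    (hv : v ∈ ball 0 r) (hneg : g (-v) ≤ 0) (hpos : 0 ≤ g v) : g v = 0 := by
  obtain ⟨z, hz⟩ := exists_circle_smul_eq_zero hg hneg hpos
  have hzv : (z : ℂ) • v ∈ ball 0 r := by simpa [norm_smul, Circle.norm_coe] using hv
  have hzS : (z : ℂ) • v ∈ S := (hSg _ hzv).2 hz
  refine (hSg v hv).1 ?_
  simpa [smul_smul] using hS _ (inv_ne_zero z.coe_ne_zero) _ hzS

section GraphDefect

variable {n : ℕ}

def graphDefect (ψ : EuclideanSpace ℝ (Fin n) → ℝ) (y : EuclideanSpace ℝ (Fin (n + 1))) : ℝ :=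
  y (Fin.last n) - ψ (WithLp.toLp 2 fun i => y i.castSucc)

theorem continuous_graphDefect {ψ : EuclideanSpace ℝ (Fin n) → ℝ} (hψ : Continuous ψ) :
    Continuous (graphDefect ψ) := by
  unfold graphDefect
  fun_prop

theorem graphDefect_smul_single_last (ψ : EuclideanSpace ℝ (Fin n) → ℝ) (s : ℝ) :
    graphDefect ψ (s • EuclideanSpace.single (Fin.last n) 1) = s - ψ 0 := by
  have hzero : (WithLp.toLp 2 fun _ : Fin n => (0 : ℝ)) = 0 := rfl
  simp [graphDefect, (Fin.castSucc_lt_last _).ne, hzero]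

end GraphDefect

/-- The set `S = {v ∈ ℂ² : |v 0| = |v 1|}` (the affine-chart picture of the
nonsmooth Levi-flat hypersurface `M = {[z₀,z₁,z₂] ∈ ℂP² : |z₀| = |z₁|}` near
`[0,0,1]`) is not the graph of a Lipschitz function in any neighborhood of the
origin, after any orthogonal real-linear identification of `ℂ²` with `ℝ⁴ = ℝ³ × ℝ`. -/
theorem not_lipschitz_graph_near_origin :
    ¬ ∃ (U : Set (EuclideanSpace ℂ (Fin 2))), U ∈ nhds (0 : EuclideanSpace ℂ (Fin 2)) ∧
      ∃ (L : EuclideanSpace ℂ (Fin 2) ≃ₗᵢ[ℝ] EuclideanSpace ℝ (Fin 4))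
        (ψ : EuclideanSpace ℝ (Fin 3) → ℝ) (K : NNReal),
        LipschitzWith K ψ ∧
        {v : EuclideanSpace ℂ (Fin 2) | ‖v 0‖ = ‖v 1‖} ∩ U =
          {p ∈ U | L p 3 = ψ (WithLp.toLp 2 (fun i : Fin 3 => L p i.castSucc) : EuclideanSpace ℝ (Fin 3))} := by
  rintro ⟨U, hU, L, ψ, K, hLip, hEq⟩
  obtain ⟨r, hr, hball⟩ := Metric.mem_nhds_iff.1 hU
  set S : Set (EuclideanSpace ℂ (Fin 2)) := {v | ‖v 0‖ = ‖v 1‖}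
  set g := fun p => graphDefect ψ (L p)
  have hcone : ∀ c : ℂ, c ≠ 0 → ∀ v ∈ S, c • v ∈ S := fun c _ v (hv : ‖v 0‖ = ‖v 1‖) => by
    simp [S, hv]
  have hSg : ∀ p ∈ ball 0 r, p ∈ S ↔ g p = 0 := fun p hp => by
    simpa [hball hp, g, graphDefect, sub_eq_zero, Fin.last] using Set.ext_iff.1 hEq p
  have hg : Continuous g := (continuous_graphDefect hLip.continuous).comp L.continuous
  set e := L.symm (EuclideanSpace.single (Fin.last 3) 1)
  have hge : ∀ s : ℝ, g (s • e) = s - ψ 0 := fun s => by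
    show graphDefect ψ (L (s • e)) = _
    rw [map_smul, L.apply_symm_apply, graphDefect_smul_single_last]
  have hψ0 : ψ 0 = 0 := by
    have hg0 : g 0 = 0 := (hSg 0 (mem_ball_self hr)).1 (by simp [S])
    rw [← zero_smul ℝ e, hge] at hg0
    linarith
  have hv : (r / 2) • e ∈ ball 0 r := by simp [e, norm_smul, abs_of_pos hr, hr]
  have hgv := eq_zero_of_sign_change_of_complex_cone hcone hg hSg hv
    (by rw [← neg_smul, hge]; linarith) (by rw [hge]; linarith)
  rw [hge] at hgv
  linarith
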